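/- Let λ ∈ (0,1), let α = sqrt(1 − λ/8), and let δ₀ ∈ (0,1) satisfy λ/100 = δ₀^{λ²/256}. Then for every δ with 0 < δ ≤ δ₀: log(4/δ) / (2·α²·ε²·(1 − λ/16)²) ≤ (1 + λ/2) · (1/(2ε²)) · log(1/δ) for every ε > 0. -/
import Mathlib


/-- Sample-count inequality in Lemma 5.1 (ABALEH). -/
theorem stmt_14 (lam α δ₀ : ℝ) (hlam0 : 0 < lam) (hlam1 : lam < 1)
    (hα : α = Real.sqrt (1 - lam / 8)) (hδ₀0 : 0 < δ₀) (hδ₀1 : δ₀ < 1)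
    (hsol : lam / 100 = δ₀ ^ (lam ^ 2 / 256)) :
    ∀ δ : ℝ, 0 < δ → δ ≤ δ₀ → ∀ ε : ℝ, 0 < ε →
      Real.log (4 / δ) / (2 * α ^ 2 * ε ^ 2 * (1 - lam / 16) ^ 2)
        ≤ (1 + lam / 2) * (1 / (2 * ε ^ 2)) * Real.log (1 / δ) := by
  intro δ hδ0 hδle ε hε
  have h8 : (0:ℝ) < 1 - lam / 8 := by linarith
  have h16 : (0:ℝ) < 1 - lam / 16 := by linarith
  have hα2 : α ^ 2 = 1 - lam / 8 := by rw [hα, Real.sq_sqrt h8.le]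
  -- log of the defining equation for δ₀
  have hL0 : Real.log (lam / 100) = (lam ^ 2 / 256) * Real.log δ₀ := by
    have := congrArg Real.log hsol
    rwa [Real.log_rpow hδ₀0] at this
  set M : ℝ := -Real.log δ with hMdef
  have hlogd : Real.log δ ≤ Real.log δ₀ := Real.log_le_log hδ0 hδle
  have hlaminv : Real.log (100 / lam) = -Real.log (lam / 100) := by
    rw [show (100 / lam : ℝ) = (lam / 100)⁻¹ by field_simp, Real.log_inv]
  have hlam2 : (0:ℝ) < lam ^ 2 := by positivity
  have hM : (256 / lam ^ 2) * Real.log (100 / lam) ≤ M := by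
    rw [hlaminv, hL0]
    have : (256 / lam ^ 2) * -(lam ^ 2 / 256 * Real.log δ₀) = -Real.log δ₀ := by
      field_simp
    rw [this]
    linarith
  have hlog100 : Real.log 100 ≤ Real.log (100 / lam) := by
    apply Real.log_le_log (by norm_num)
    rw [le_div_iff₀ hlam0]; nlinarith
  have hlog4 : Real.log 4 ≤ Real.log (100 / lam) :=
    le_trans (Real.log_le_log (by norm_num) (by norm_num)) hlog100
  have hXpos : (0:ℝ) ≤ Real.log (100 / lam) := by
    have : Real.log 1 ≤ Real.log 100 := Real.log_le_log one_pos (by norm_num)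
    simpa using this.trans hlog100
  have hMpos : (0:ℝ) ≤ M := by
    have : 0 ≤ (256 / lam ^ 2) * Real.log (100 / lam) := by positivity
    linarith
  obtain ⟨C, hC⟩ : ∃ C : ℝ, C = (1 + lam / 2) * (1 - lam / 8) * (1 - lam / 16) ^ 2 := ⟨_, rfl⟩
  have hC1 : 37 * lam / 256 ≤ C - 1 := by
    rw [hC]
    nlinarith [mul_nonneg hlam0.le (sub_nonneg.2 hlam1.le),
      mul_nonneg (mul_nonneg (mul_nonneg hlam0.le hlam0.le) hlam0.le) (sub_nonneg.2 hlam1.le)]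
  -- key: log 4 ≤ (C - 1) * M
  have hkey : Real.log 4 ≤ (C - 1) * M := by
    have h1 : Real.log (100 / lam) ≤ (37 * lam / 256) * ((256 / lam ^ 2) * Real.log (100 / lam)) := by
      have heq : (37 * lam / 256) * ((256 / lam ^ 2) * Real.log (100 / lam))
          = (37 / lam) * Real.log (100 / lam) := by field_simp
      rw [heq]
      have h37 : (1:ℝ) ≤ 37 / lam := by
        rw [le_div_iff₀ hlam0]; linarith
      exact le_mul_of_one_le_left hXpos h37
    have h2 : (37 * lam / 256) * ((256 / lam ^ 2) * Real.log (100 / lam))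
        ≤ (37 * lam / 256) * M :=
      mul_le_mul_of_nonneg_left hM (by positivity)
    have h3 : (37 * lam / 256) * M ≤ (C - 1) * M :=
      mul_le_mul_of_nonneg_right hC1 hMpos
    exact hlog4.trans (h1.trans (h2.trans h3))
  -- finish
  have hD : (0:ℝ) < 2 * α ^ 2 * ε ^ 2 * (1 - lam / 16) ^ 2 := by
    rw [hα2]; positivity
  rw [div_le_iff₀ hD]
  have hlog4δ : Real.log (4 / δ) = Real.log 4 + M := by
    rw [Real.log_div (by norm_num) hδ0.ne', hMdef]; ring
  have hlog1δ : Real.log (1 / δ) = M := by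
    rw [one_div, Real.log_inv]
  rw [hlog4δ, hlog1δ, hα2]
  have heq : (1 + lam / 2) * (1 / (2 * ε ^ 2)) * M * (2 * (1 - lam / 8) * ε ^ 2 * (1 - lam / 16) ^ 2)
      = C * M := by
    rw [hC]; field_simp
  rw [heq]
  have hexp : (C - 1) * M = C * M - M := by ring
  linarith [hkey, hexp.symm.le, hexp.le]
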